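/- Every k-algebra automorphism σ of A_{q,n} factors uniquely as σ = λ ∘ τ, where λ is a k-algebra automorphism of A_{q,n} mapping each x_i into the k-linear span Ω of x_1, …, x_q (a linear automorphism), and τ belongs to the group I_{q,n} of linearly trivial automorphisms. Equivalently, the group homomorphism from the automorphism group of A_{q,n} to GL(m/m²) induced by the action on the cotangent space is surjective, splits, and has kernel I_{q,n}. -/

import Mathlib

set_option synthInstance.maxHeartbeats 400000

noncomputable section

/-- The ring of `n`-nil polynomials `A_{q,n} = k[x_1,…,x_q]/m_0^n`. -/
abbrev Aqn (k : Type) [Field k] (q n : ℕ) : Type :=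
  MvPolynomial (Fin q) k ⧸
    (Ideal.span (Set.range (MvPolynomial.X : Fin q → MvPolynomial (Fin q) k))) ^ n

/-- The image of the variable `x_i` in `A_{q,n}`. -/
def xA (k : Type) [Field k] (q n : ℕ) (i : Fin q) : Aqn k q n :=
  Ideal.Quotient.mk _ (MvPolynomial.X i)

/-- The maximal ideal `m` of `A_{q,n}` generated by `x_1, …, x_q`. -/
def mA (k : Type) [Field k] (q n : ℕ) : Ideal (Aqn k q n) :=
  Ideal.span (Set.range (xA k q n))

/-- The `k`-linear span `Ω` of `x_1, …, x_q` in `A_{q,n}`. -/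
def OmegaA (k : Type) [Field k] (q n : ℕ) : Submodule k (Aqn k q n) :=
  Submodule.span k (Set.range (xA k q n))
/-!
An endomorphism `f` of `A_{q,n}` maps `m` into itself (the `x_i` are nilpotent, and nilpotents lie
in `m`), so it induces a map on `m/m²`, whose matrix `cotangentMatrix f` is read off from the
coefficients of `x_1, …, x_q` (well defined because `n ≥ 2`). This matrix is multiplicative, `f` is
linearly trivial iff its matrix is `1`, and a linear `f` is the linear substitution by its matrix.
So if `P` is the matrix of `σ`, the substitution `λ` by `P` is invertible (with inverse the
substitution by the matrix of `σ⁻¹`) and `τ = λ⁻¹ ∘ σ` has matrix `1`; conversely, in any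
factorization `σ = λ' ∘ τ'` the matrix of `λ'` is `P`, whence `λ' = λ` and `τ' = τ`.
-/

namespace MvPolynomial

variable {σ R : Type*}

lemma mem_idealOfVars_iff [CommSemiring R] {p : MvPolynomial σ R} :
    p ∈ idealOfVars σ R ↔ constantCoeff p = 0 := by
  simpa [Finsupp.degree_eq_zero_iff, constantCoeff_eq] using mem_pow_idealOfVars_iff' 1 p

lemma coeff_single_one_eq_zero_of_mem_pow [CommSemiring R] {m : ℕ} (hm : 2 ≤ m) {p : MvPolynomial σ R}
    (hp : p ∈ idealOfVars σ R ^ m) (i : σ) : coeff (Finsupp.single i 1) p = 0 :=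
  (mem_pow_idealOfVars_iff' m p).1 hp _ (by simp; omega)

lemma sub_sum_coeff_smul_X_mem_sq [CommRing R] [Fintype σ] {p : MvPolynomial σ R}
    (hp : p ∈ idealOfVars σ R) :
    p - ∑ i, coeff (Finsupp.single i 1) p • X i ∈ idealOfVars σ R ^ 2 := by
  classical
  refine (mem_pow_idealOfVars_iff' 2 _).2 fun d hd => ?_
  obtain hd0 | hd1 : d.degree = 0 ∨ d.degree = 1 := by omega
  · rw [Finsupp.degree_eq_zero_iff] at hd0
    subst hd0
    simp [coeff_sum, ← constantCoeff_eq, mem_idealOfVars_iff.1 hp]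
  · obtain ⟨j, rfl⟩ : d ∈ Set.range (Finsupp.single · 1) := Finsupp.range_single_one ▸ hd1
    simp [coeff_sum, coeff_X, Finsupp.single_left_inj]

end MvPolynomial

open MvPolynomial

theorem Ideal.map_pow_le_pow {R S F : Type*} [CommSemiring R] [CommSemiring S] [FunLike F R S]
    [RingHomClass F R S] {f : F} {I : Ideal R} {J : Ideal S} (h : I.map f ≤ J) (m : ℕ) :
    (I ^ m).map f ≤ J ^ m :=
  Ideal.map_pow f I m ▸ Ideal.pow_right_mono h m

namespace Aqn

variable {k : Type} [Field k] {q n : ℕ}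

lemma mA_pow_eq_map (m : ℕ) :
    mA k q n ^ m = (idealOfVars (Fin q) k ^ m).map (Ideal.Quotient.mk _) := by
  rw [mA, Ideal.map_pow, Ideal.map_span, ← Set.range_comp]
  rfl

lemma mA_eq_map : mA k q n = (idealOfVars (Fin q) k).map (Ideal.Quotient.mk _) := by
  simpa using mA_pow_eq_map (n := n) 1

lemma mA_pow_self : mA k q n ^ n = ⊥ := by
  rw [mA_pow_eq_map, Ideal.map_quotient_self]

lemma xA_mem_mA (i : Fin q) : xA k q n i ∈ mA k q n :=
  Ideal.subset_span (Set.mem_range_self i)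

lemma mem_mA_of_isNilpotent (hn : n ≠ 0) {a : Aqn k q n} (ha : IsNilpotent a) :
    a ∈ mA k q n := by
  obtain ⟨p, rfl⟩ := Ideal.Quotient.mk_surjective a
  obtain ⟨m, hm⟩ := ha
  rw [← map_pow, Ideal.Quotient.eq_zero_iff_mem] at hm
  have hpm : constantCoeff p ^ m = 0 := by
    rw [← map_pow, ← mem_idealOfVars_iff]
    exact Ideal.pow_le_self hn hm
  rw [mA_eq_map]
  exact Ideal.mem_map_of_mem _ (mem_idealOfVars_iff.2 (IsNilpotent.eq_zero ⟨m, hpm⟩))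

lemma isNilpotent_xA (i : Fin q) : IsNilpotent (xA k q n i) :=
  ⟨n, by rw [← Ideal.mem_bot, ← mA_pow_self]; exact Ideal.pow_mem_pow (xA_mem_mA i) n⟩

lemma map_mA_le (hn : n ≠ 0) (f : Aqn k q n →ₐ[k] Aqn k q n) :
    (mA k q n).map f ≤ mA k q n := by
  rw [mA, Ideal.map_span, Ideal.span_le]
  rintro _ ⟨_, ⟨i, rfl⟩, rfl⟩
  exact mem_mA_of_isNilpotent hn ((isNilpotent_xA i).map f)

lemma map_mem_mA_sq (hn : n ≠ 0) (f : Aqn k q n →ₐ[k] Aqn k q n) {a : Aqn k q n}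
    (ha : a ∈ mA k q n ^ 2) : f a ∈ mA k q n ^ 2 :=
  Ideal.map_pow_le_pow (map_mA_le hn f) 2 (Ideal.mem_map_of_mem f ha)

@[ext]
lemma algHom_ext {B : Type*} [Semiring B] [Algebra k B] {f g : Aqn k q n →ₐ[k] B}
    (h : ∀ i, f (xA k q n i) = g (xA k q n i)) : f = g :=
  Ideal.Quotient.algHom_ext k (MvPolynomial.algHom_ext h)

def linCoeff (hn : 2 ≤ n) : Aqn k q n →ₗ[k] Fin q → k :=
  ((idealOfVars (Fin q) k ^ n).restrictScalars k).liftQ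
      (LinearMap.pi fun i => lcoeff k (Finsupp.single i 1))
      (fun _ hp => funext (coeff_single_one_eq_zero_of_mem_pow hn hp)) ∘ₗ
    (Submodule.Quotient.restrictScalarsEquiv k _).symm.toLinearMap

lemma linCoeff_mk (hn : 2 ≤ n) (p : MvPolynomial (Fin q) k) (i : Fin q) :
    linCoeff hn (Ideal.Quotient.mk _ p) i = coeff (Finsupp.single i 1) p :=
  rfl

lemma linCoeff_xA (hn : 2 ≤ n) (j : Fin q) : linCoeff hn (xA k q n j) = Pi.single j 1 := by
  ext i
  simp [xA, linCoeff_mk, coeff_X, Pi.single_apply, Finsupp.single_left_inj, eq_comm]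

lemma linCoeff_eq_zero_of_mem_sq (hn : 2 ≤ n) {a : Aqn k q n} (ha : a ∈ mA k q n ^ 2) :
    linCoeff hn a = 0 := by
  rw [mA_pow_eq_map, Ideal.mem_map_iff_of_surjective _ Ideal.Quotient.mk_surjective] at ha
  obtain ⟨p, hp, rfl⟩ := ha
  exact funext (coeff_single_one_eq_zero_of_mem_pow le_rfl hp)

lemma sub_sum_linCoeff_smul_mem_sq (hn : 2 ≤ n) {a : Aqn k q n} (ha : a ∈ mA k q n) :
    a - ∑ i, linCoeff hn a i • xA k q n i ∈ mA k q n ^ 2 := by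
  rw [mA_eq_map, Ideal.mem_map_iff_of_surjective _ Ideal.Quotient.mk_surjective] at ha
  obtain ⟨p, hp, rfl⟩ := ha
  rw [mA_pow_eq_map]
  have h := Ideal.mem_map_of_mem (Ideal.Quotient.mkₐ k (idealOfVars (Fin q) k ^ n))
    (sub_sum_coeff_smul_X_mem_sq hp)
  simp only [map_sub, map_sum, map_smul] at h
  exact h

/-- The matrix of the map induced by `f` on `m/m²` in the basis `x_1, …, x_q`: its column `j`
holds the coordinates of `f x_j`. -/
def cotangentMatrix (hn : 2 ≤ n) (f : Aqn k q n →ₐ[k] Aqn k q n) : Matrix (Fin q) (Fin q) k :=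
  Matrix.of fun i j => linCoeff hn (f (xA k q n j)) i

lemma cotangentMatrix_apply (hn : 2 ≤ n) (f : Aqn k q n →ₐ[k] Aqn k q n) (i j : Fin q) :
    cotangentMatrix hn f i j = linCoeff hn (f (xA k q n j)) i :=
  rfl

lemma sub_sum_cotangentMatrix_smul_mem_sq (hn : 2 ≤ n) (f : Aqn k q n →ₐ[k] Aqn k q n)
    (j : Fin q) :
    f (xA k q n j) - ∑ i, cotangentMatrix hn f i j • xA k q n i ∈ mA k q n ^ 2 :=
  sub_sum_linCoeff_smul_mem_sq hn (map_mA_le (by omega) f (Ideal.mem_map_of_mem f (xA_mem_mA j)))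

lemma cotangentMatrix_comp (hn : 2 ≤ n) (f g : Aqn k q n →ₐ[k] Aqn k q n) :
    cotangentMatrix hn (f.comp g) = cotangentMatrix hn f * cotangentMatrix hn g := by
  ext i j
  obtain ⟨r, hr, hgj⟩ : ∃ r ∈ mA k q n ^ 2,
      g (xA k q n j) = ∑ l, cotangentMatrix hn g l j • xA k q n l + r :=
    ⟨_, sub_sum_cotangentMatrix_smul_mem_sq hn g j, by abel⟩
  have hfr := linCoeff_eq_zero_of_mem_sq hn (map_mem_mA_sq (by omega) f hr)
  rw [cotangentMatrix_apply, AlgHom.comp_apply, hgj, map_add, map_add, hfr, add_zero, map_sum,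
    map_sum, Matrix.mul_apply]
  simp only [map_smul, Finset.sum_apply, Pi.smul_apply, smul_eq_mul, cotangentMatrix_apply hn f]
  exact Finset.sum_congr rfl fun l _ => mul_comm _ _

lemma cotangentMatrix_id (hn : 2 ≤ n) : cotangentMatrix hn (AlgHom.id k (Aqn k q n)) = 1 := by
  ext i j
  rw [cotangentMatrix_apply, AlgHom.id_apply, linCoeff_xA, Matrix.one_apply, Pi.single_apply]

lemma sum_smul_xA_mem_OmegaA (c : Fin q → k) : ∑ i, c i • xA k q n i ∈ OmegaA k q n :=
  (Submodule.mem_span_range_iff_exists_fun k).2 ⟨c, rfl⟩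

lemma sum_smul_xA_mem_mA (c : Fin q → k) : ∑ i, c i • xA k q n i ∈ mA k q n :=
  Submodule.sum_mem _ fun i _ => Submodule.smul_of_tower_mem _ (c i) (xA_mem_mA i)

lemma aeval_eq_zero_of_mem_pow {v : Fin q → Aqn k q n} (hv : ∀ j, v j ∈ mA k q n)
    {p : MvPolynomial (Fin q) k} (hp : p ∈ idealOfVars (Fin q) k ^ n) : aeval v p = 0 := by
  have hle : (idealOfVars (Fin q) k).map (aeval v) ≤ mA k q n := by
    rw [Ideal.map_span, Ideal.span_le]
    rintro _ ⟨_, ⟨j, rfl⟩, rfl⟩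
    simpa using hv j
  rw [← Ideal.mem_bot, ← mA_pow_self]
  exact Ideal.map_pow_le_pow hle n (Ideal.mem_map_of_mem _ hp)

def linearSubst (M : Matrix (Fin q) (Fin q) k) : Aqn k q n →ₐ[k] Aqn k q n :=
  Ideal.Quotient.liftₐ _ (aeval fun j => ∑ i, M i j • xA k q n i) fun _ =>
    aeval_eq_zero_of_mem_pow fun j => sum_smul_xA_mem_mA (M · j)

lemma linearSubst_xA (M : Matrix (Fin q) (Fin q) k) (j : Fin q) :
    linearSubst M (xA k q n j) = ∑ i, M i j • xA k q n i := by
  rw [linearSubst, xA, Ideal.Quotient.liftₐ_apply]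
  exact aeval_X _ j

lemma linearSubst_mul (M N : Matrix (Fin q) (Fin q) k) :
    (linearSubst (M * N) : Aqn k q n →ₐ[k] Aqn k q n) = (linearSubst M).comp (linearSubst N) := by
  ext j
  simp only [AlgHom.comp_apply, linearSubst_xA, map_sum, map_smul, Finset.smul_sum, smul_smul,
    Matrix.mul_apply, Finset.sum_smul]
  rw [Finset.sum_comm]
  exact Finset.sum_congr rfl fun _ _ => Finset.sum_congr rfl fun _ _ => by rw [mul_comm]

lemma linearSubst_one : (linearSubst 1 : Aqn k q n →ₐ[k] Aqn k q n) = AlgHom.id k _ := by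
  ext j
  simp [linearSubst_xA, Matrix.one_apply]

def linearSubstEquiv (M : (Matrix (Fin q) (Fin q) k)ˣ) : Aqn k q n ≃ₐ[k] Aqn k q n :=
  AlgEquiv.ofAlgHom (linearSubst ↑M) (linearSubst ↑M⁻¹)
    (by rw [← linearSubst_mul, M.mul_inv, linearSubst_one])
    (by rw [← linearSubst_mul, M.inv_mul, linearSubst_one])

lemma linearSubstEquiv_xA_mem_OmegaA (M : (Matrix (Fin q) (Fin q) k)ˣ) (j : Fin q) :
    linearSubstEquiv M (xA k q n j) ∈ OmegaA k q n :=
  (linearSubst_xA (M : Matrix (Fin q) (Fin q) k) j).symm ▸ sum_smul_xA_mem_OmegaA _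

lemma cotangentMatrix_linearSubst (hn : 2 ≤ n) (M : Matrix (Fin q) (Fin q) k) :
    cotangentMatrix hn (linearSubst M : Aqn k q n →ₐ[k] Aqn k q n) = M := by
  ext i j
  simp [cotangentMatrix_apply, linearSubst_xA, linCoeff_xA, Pi.single_apply]

lemma eq_linearSubst_cotangentMatrix (hn : 2 ≤ n) {f : Aqn k q n →ₐ[k] Aqn k q n}
    (hf : ∀ i, f (xA k q n i) ∈ OmegaA k q n) : f = linearSubst (cotangentMatrix hn f) := by
  ext j
  obtain ⟨c, hc⟩ := (Submodule.mem_span_range_iff_exists_fun k).1 (hf j)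
  have hcM : ∀ i, cotangentMatrix hn f i j = c i := fun i => by
    simp [cotangentMatrix_apply, ← hc, linCoeff_xA, Pi.single_apply]
  simp only [linearSubst_xA, hcM, hc]

lemma cotangentMatrix_eq_one_iff (hn : 2 ≤ n) (f : Aqn k q n →ₐ[k] Aqn k q n) :
    cotangentMatrix hn f = 1 ↔ ∀ i, f (xA k q n i) - xA k q n i ∈ mA k q n ^ 2 := by
  constructor
  · intro h j
    simpa [h, Matrix.one_apply] using sub_sum_cotangentMatrix_smul_mem_sq hn f j
  · intro h
    ext i j
    have := congrFun (linCoeff_eq_zero_of_mem_sq hn (h j)) i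
    rw [map_sub, Pi.sub_apply, Pi.zero_apply, sub_eq_zero, linCoeff_xA] at this
    rw [cotangentMatrix_apply, this, Matrix.one_apply, Pi.single_apply]

lemma eq_linearSubst_cotangentMatrix_comp (hn : 2 ≤ n) {f g : Aqn k q n →ₐ[k] Aqn k q n}
    (hf : ∀ i, f (xA k q n i) ∈ OmegaA k q n)
    (hg : ∀ i, g (xA k q n i) - xA k q n i ∈ mA k q n ^ 2) :
    f = linearSubst (cotangentMatrix hn (f.comp g)) := by
  rw [cotangentMatrix_comp, (cotangentMatrix_eq_one_iff hn g).2 hg, mul_one]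
  exact eq_linearSubst_cotangentMatrix hn hf

end Aqn

open Aqn

theorem automorphism_unique_factorization_general (k : Type) [Field k] (q n : ℕ)
    (hn : 2 ≤ n) (σ : Aqn k q n ≃ₐ[k] Aqn k q n) :
    ∃! p : (Aqn k q n ≃ₐ[k] Aqn k q n) × (Aqn k q n ≃ₐ[k] Aqn k q n),
      (∀ i, p.1 (xA k q n i) ∈ OmegaA k q n) ∧
      (∀ i, p.2 (xA k q n i) - xA k q n i ∈ (mA k q n) ^ 2) ∧
      (∀ a : Aqn k q n, σ a = p.1 (p.2 a)) := by
  set P := cotangentMatrix hn σ.toAlgHom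
  set Q := cotangentMatrix hn σ.symm.toAlgHom
  have hPQ : P * Q = 1 := by rw [← cotangentMatrix_comp, AlgEquiv.comp_symm, cotangentMatrix_id]
  have hQP : Q * P = 1 := by rw [← cotangentMatrix_comp, AlgEquiv.symm_comp, cotangentMatrix_id]
  set L := linearSubstEquiv (n := n) ⟨P, Q, hPQ, hQP⟩
  have hτ : cotangentMatrix hn (σ.trans L.symm).toAlgHom = 1 := by
    change cotangentMatrix hn ((linearSubst Q).comp σ.toAlgHom) = 1
    rw [cotangentMatrix_comp, cotangentMatrix_linearSubst, hQP]
  refine ⟨(L, σ.trans L.symm), ⟨linearSubstEquiv_xA_mem_OmegaA _,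
    (cotangentMatrix_eq_one_iff hn _).1 hτ, fun a => (L.apply_symm_apply (σ a)).symm⟩, ?_⟩
  rintro ⟨L', τ'⟩ ⟨hL', hτ', hσ⟩
  have hcomp : L'.toAlgHom.comp τ'.toAlgHom = σ.toAlgHom := AlgHom.ext fun a => (hσ a).symm
  have hL : L' = L := AlgEquiv.coe_toAlgHom_injective <|
    (eq_linearSubst_cotangentMatrix_comp hn hL' hτ').trans (by rw [hcomp]; rfl)
  refine Prod.ext hL (AlgEquiv.ext fun a => L'.injective ?_)
  rw [← hσ a, hL]
  exact (L.apply_symm_apply (σ a)).symm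

/-- every `k`-algebra automorphism `σ` of `A_{q,n}` factors uniquely as
`σ = λ ∘ τ`, where `λ` is a linear automorphism (each `λ(x_i)` lies in the span `Ω` of the
`x_j`'s) and `τ` is linearly trivial (`τ(x_i) - x_i ∈ m²` for all `i`). -/
theorem automorphism_unique_factorization (k : Type) [Field k] (q n : ℕ)
    (hq : 1 ≤ q) (hn : 2 ≤ n) (σ : Aqn k q n ≃ₐ[k] Aqn k q n) :
    ∃! p : (Aqn k q n ≃ₐ[k] Aqn k q n) × (Aqn k q n ≃ₐ[k] Aqn k q n),
      (∀ i, p.1 (xA k q n i) ∈ OmegaA k q n) ∧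
      (∀ i, p.2 (xA k q n i) - xA k q n i ∈ (mA k q n) ^ 2) ∧
      (∀ a : Aqn k q n, σ a = p.1 (p.2 a)) :=
  automorphism_unique_factorization_general k q n hn σ
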